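/- arXiv:1802.00397 — 7 statements merged into one kernel-verified Lean document; each statement's English description precedes it below -/
import Mathlib

section
/- For every Lebesgue-integrable function f : ℝ → ℝ, the integral of f over ℝ equals the integral of x ↦ f(x - 1/x) over ℝ; equivalently, the Boole map preserves Lebesgue measure. -/
/-!
The Boole map `T x = x - 1/x` is two-to-one: the preimages of `y` are the roots
`(y ± √(y² + 4)) / 2` of `x² - y x - 1`, one positive and one negative. Both inverse branches
are increasing with derivatives `(1 ± y / √(y² + 4)) / 2`, which add up to `1`. Hence
`vol (T⁻¹ s) = vol (g₊ s) + vol (g₋ s) = ∫_s (g₊' + g₋') = vol s`, so `T` preserves Lebesgue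
measure and Boole's identity is the change of variables along `T`.
-/

open MeasureTheory Set

/-- Lean's `1 / 0 = 0` makes `booleMap 0 = 0`; this only affects the null set `{0}`. -/
noncomputable def booleMap (x : ℝ) : ℝ := x - 1 / x

noncomputable def boolePosInv (y : ℝ) : ℝ := (y + √(y ^ 2 + 4)) / 2

noncomputable def booleNegInv (y : ℝ) : ℝ := (y - √(y ^ 2 + 4)) / 2

lemma abs_lt_sqrt_sq_add_four (y : ℝ) : |y| < √(y ^ 2 + 4) :=
  (Real.lt_sqrt (abs_nonneg y)).2 (by rw [sq_abs]; linarith)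

lemma sqrt_sq_add_four_pos (y : ℝ) : 0 < √(y ^ 2 + 4) :=
  (abs_nonneg y).trans_lt (abs_lt_sqrt_sq_add_four y)

lemma boolePosInv_pos (y : ℝ) : 0 < boolePosInv y := by
  have := abs_lt_sqrt_sq_add_four y
  unfold boolePosInv
  linarith [neg_abs_le y]

lemma booleNegInv_neg (y : ℝ) : booleNegInv y < 0 := by
  have := abs_lt_sqrt_sq_add_four y
  unfold booleNegInv
  linarith [le_abs_self y]

lemma booleMap_eq_of_sq_eq {x y : ℝ} (hx : x ≠ 0) (h : x ^ 2 = y * x + 1) : booleMap x = y := by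
  unfold booleMap
  field_simp
  linear_combination h

lemma booleMap_boolePosInv (y : ℝ) : booleMap (boolePosInv y) = y := by
  refine booleMap_eq_of_sq_eq (boolePosInv_pos y).ne' ?_
  have := Real.sq_sqrt (show 0 ≤ y ^ 2 + 4 by positivity)
  unfold boolePosInv
  linear_combination this / 4

lemma booleMap_booleNegInv (y : ℝ) : booleMap (booleNegInv y) = y := by
  refine booleMap_eq_of_sq_eq (booleNegInv_neg y).ne ?_
  have := Real.sq_sqrt (show 0 ≤ y ^ 2 + 4 by positivity)
  unfold booleNegInv
  linear_combination this / 4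

lemma sqrt_booleMap_sq_add_four {x : ℝ} (hx : x ≠ 0) :
    √(booleMap x ^ 2 + 4) = |x + 1 / x| := by
  rw [← Real.sqrt_sq_eq_abs]
  congr 1
  unfold booleMap
  field_simp
  ring

lemma boolePosInv_booleMap {x : ℝ} (hx : 0 < x) : boolePosInv (booleMap x) = x := by
  rw [boolePosInv, sqrt_booleMap_sq_add_four hx.ne', abs_of_pos (by positivity), booleMap]
  ring

lemma booleNegInv_booleMap {x : ℝ} (hx : x < 0) : booleNegInv (booleMap x) = x := by
  have : x + 1 / x < 0 := by linarith [one_div_neg.2 hx]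
  rw [booleNegInv, sqrt_booleMap_sq_add_four hx.ne, abs_of_neg this, booleMap]
  ring

lemma image_boolePosInv (s : Set ℝ) : boolePosInv '' s = booleMap ⁻¹' s ∩ Ioi 0 := by
  ext x
  constructor
  · rintro ⟨y, hy, rfl⟩
    exact ⟨by simpa [booleMap_boolePosInv] using hy, boolePosInv_pos y⟩
  · rintro ⟨hx, hx0⟩
    exact ⟨booleMap x, hx, boolePosInv_booleMap hx0⟩

lemma image_booleNegInv (s : Set ℝ) : booleNegInv '' s = booleMap ⁻¹' s ∩ Iio 0 := by
  ext x
  constructor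
  · rintro ⟨y, hy, rfl⟩
    exact ⟨by simpa [booleMap_booleNegInv] using hy, booleNegInv_neg y⟩
  · rintro ⟨hx, hx0⟩
    exact ⟨booleMap x, hx, booleNegInv_booleMap hx0⟩

lemma hasDerivAt_sqrt_sq_add_four (y : ℝ) :
    HasDerivAt (fun y => √(y ^ 2 + 4)) (y / √(y ^ 2 + 4)) y := by
  convert ((hasDerivAt_pow 2 y).add_const 4).sqrt (by positivity) using 1
  field_simp
  ring

lemma hasDerivAt_boolePosInv (y : ℝ) :
    HasDerivAt boolePosInv ((1 + y / √(y ^ 2 + 4)) / 2) y :=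
  ((hasDerivAt_id y).add (hasDerivAt_sqrt_sq_add_four y)).div_const 2

lemma hasDerivAt_booleNegInv (y : ℝ) :
    HasDerivAt booleNegInv ((1 - y / √(y ^ 2 + 4)) / 2) y :=
  ((hasDerivAt_id y).sub (hasDerivAt_sqrt_sq_add_four y)).div_const 2

lemma abs_div_sqrt_sq_add_four_le_one (y : ℝ) : |y / √(y ^ 2 + 4)| ≤ 1 := by
  rw [abs_div, abs_of_pos (sqrt_sq_add_four_pos y), div_le_one (sqrt_sq_add_four_pos y)]
  exact (abs_lt_sqrt_sq_add_four y).le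

lemma volume_image_eq_setLIntegral_deriv {g g' : ℝ → ℝ} (hg : Function.Injective g)
    (hg' : ∀ y, HasDerivAt g (g' y) y) (hg'_nonneg : ∀ y, 0 ≤ g' y) {s : Set ℝ}
    (hs : MeasurableSet s) :
    volume (g '' s) = ∫⁻ y in s, ENNReal.ofReal (g' y) := by
  have := lintegral_image_eq_lintegral_abs_deriv_mul hs
    (fun y _ => (hg' y).hasDerivWithinAt) hg.injOn 1
  simp only [Pi.one_apply, mul_one, setLIntegral_one] at this
  rw [this]
  exact setLIntegral_congr_fun hs fun y _ => by rw [abs_of_nonneg (hg'_nonneg y)]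

lemma volume_image_boolePosInv {s : Set ℝ} (hs : MeasurableSet s) :
    volume (boolePosInv '' s) = ∫⁻ y in s, ENNReal.ofReal ((1 + y / √(y ^ 2 + 4)) / 2) :=
  volume_image_eq_setLIntegral_deriv (Function.LeftInverse.injective booleMap_boolePosInv)
    hasDerivAt_boolePosInv
    (fun y => by linarith [(abs_le.1 (abs_div_sqrt_sq_add_four_le_one y)).1]) hs

lemma volume_image_booleNegInv {s : Set ℝ} (hs : MeasurableSet s) :
    volume (booleNegInv '' s) = ∫⁻ y in s, ENNReal.ofReal ((1 - y / √(y ^ 2 + 4)) / 2) :=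
  volume_image_eq_setLIntegral_deriv (Function.LeftInverse.injective booleMap_booleNegInv)
    hasDerivAt_booleNegInv
    (fun y => by linarith [(abs_le.1 (abs_div_sqrt_sq_add_four_le_one y)).2]) hs

lemma measurable_booleMap : Measurable booleMap := by
  unfold booleMap; fun_prop

lemma preimage_booleMap_diff_zero (s : Set ℝ) :
    booleMap ⁻¹' s \ {0} = booleNegInv '' s ∪ boolePosInv '' s := by
  rw [image_booleNegInv, image_boolePosInv, ← inter_union_distrib_left, Iio_union_Ioi,
    sdiff_eq]

lemma volume_preimage_booleMap {s : Set ℝ} (hs : MeasurableSet s) :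
    volume (booleMap ⁻¹' s) = volume s := by
  have hdisj : Disjoint (booleNegInv '' s) (boolePosInv '' s) := by
    rw [image_booleNegInv, image_boolePosInv]
    exact (Iio_disjoint_Ioi_of_le le_rfl).mono inter_subset_right inter_subset_right
  have hmeas : MeasurableSet (boolePosInv '' s) := by
    rw [image_boolePosInv]
    exact (measurable_booleMap hs).inter measurableSet_Ioi
  calc volume (booleMap ⁻¹' s)
      = volume (booleNegInv '' s ∪ boolePosInv '' s) := by
        rw [← preimage_booleMap_diff_zero, measure_sdiff_null (measure_singleton 0)]
    _ = (∫⁻ y in s, ENNReal.ofReal ((1 - y / √(y ^ 2 + 4)) / 2))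
          + ∫⁻ y in s, ENNReal.ofReal ((1 + y / √(y ^ 2 + 4)) / 2) := by
        rw [measure_union hdisj hmeas, volume_image_booleNegInv hs, volume_image_boolePosInv hs]
    _ = ∫⁻ y in s, 1 := by
        rw [← lintegral_add_left (by fun_prop)]
        refine setLIntegral_congr_fun hs fun y _ => ?_
        have h₁ := (abs_le.1 (abs_div_sqrt_sq_add_four_le_one y)).1
        have h₂ := (abs_le.1 (abs_div_sqrt_sq_add_four_le_one y)).2
        rw [← ENNReal.ofReal_add (by linarith) (by linarith), ← ENNReal.ofReal_one]
        congr 1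
        ring
    _ = volume s := setLIntegral_one s

theorem measurePreserving_booleMap : MeasurePreserving booleMap volume volume :=
  ⟨measurable_booleMap, Measure.ext fun s hs => by
    rw [Measure.map_apply measurable_booleMap hs, volume_preimage_booleMap hs]⟩

theorem boole_integral_invariance (f : ℝ → ℝ) (hf : Integrable f) :
    ∫ x, f x = ∫ x, f (x - 1 / x) := by
  have hmap := measurePreserving_booleMap.map_eq
  rw [← hmap] at hf
  calc ∫ x, f x = ∫ x, f x ∂(volume.map booleMap) := by rw [hmap]
    _ = ∫ x, f (booleMap x) :=
      integral_map measurable_booleMap.aemeasurable hf.aestronglyMeasurable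
end

section
/- The folded Boole map T̃ : (0,∞) → [0,∞), defined by T̃(x) = x - 1/x for x ≥ 1 and T̃(x) = 1/x - x for 0 < x ≤ 1, preserves Lebesgue measure on (0,∞). -/
/-!
For `y > 0` the equation `T̃ x = y` has exactly two solutions in `(0,∞)`: the root `upper y > 1`
of `u - 1/u = y` and the root `lower y = 1 / upper y = upper y - y < 1` of `1/u - u = y`. So
`T̃⁻¹ A` is the disjoint union of `upper '' A` and `lower '' A`, and since `lower' = upper' - 1`
with `0 < upper' < 1`, the two Jacobians `|upper'|` and `|lower'|` add up to `1`; the change of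
variables formula then gives `m (T̃⁻¹ A) = m A`.
-/

open MeasureTheory Set

theorem volume_image_union_image_eq_volume {f g : ℝ → ℝ} {A : Set ℝ} (hA : MeasurableSet A)
    (hf : Differentiable ℝ f) (hg : Differentiable ℝ g) (hfA : InjOn f A) (hgA : InjOn g A)
    (hfg : Disjoint (f '' A) (g '' A)) (hsum : ∀ y ∈ A, |deriv f y| + |deriv g y| = 1) :
    volume (f '' A ∪ g '' A) = volume A := by
  have volume_image {h : ℝ → ℝ} (hh : Differentiable ℝ h) (hhA : InjOn h A) :
      volume (h '' A) = ∫⁻ y in A, ENNReal.ofReal |deriv h y| := by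
    simpa only [setLIntegral_one, mul_one] using lintegral_image_eq_lintegral_abs_deriv_mul hA
      (fun y _ => (hh y).hasDerivAt.hasDerivWithinAt) hhA fun _ => 1
  rw [measure_union hfg (hA.image_of_continuousOn_injOn hg.continuous.continuousOn hgA),
    volume_image hf hfA, volume_image hg hgA,
    ← lintegral_add_left (measurable_deriv f).abs.ennreal_ofReal, ← setLIntegral_one]
  refine setLIntegral_congr_fun hA fun y hy => ?_
  rw [← ENNReal.ofReal_add (abs_nonneg _) (abs_nonneg _), hsum y hy, ENNReal.ofReal_one]

namespace FoldedBoole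

noncomputable def upper (y : ℝ) : ℝ := (y + √(y ^ 2 + 4)) / 2

noncomputable def lower (y : ℝ) : ℝ := upper y - y

lemma abs_lt_sqrt_sq_add_four (y : ℝ) : |y| < √(y ^ 2 + 4) :=
  (Real.lt_sqrt (abs_nonneg y)).2 (by rw [sq_abs]; linarith)

lemma upper_pos (y : ℝ) : 0 < upper y := by
  have := abs_lt_sqrt_sq_add_four y
  have := neg_abs_le y
  unfold upper; linarith

lemma upper_mul_lower (y : ℝ) : upper y * lower y = 1 := by
  have := Real.sq_sqrt (by positivity : (0 : ℝ) ≤ y ^ 2 + 4)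
  unfold lower upper; linear_combination this / 4

lemma inv_upper (y : ℝ) : (upper y)⁻¹ = lower y :=
  inv_eq_of_mul_eq_one_right (upper_mul_lower y)

lemma inv_lower (y : ℝ) : (lower y)⁻¹ = upper y :=
  inv_eq_of_mul_eq_one_left (upper_mul_lower y)

lemma lower_pos (y : ℝ) : 0 < lower y := by
  rw [← inv_upper]; exact inv_pos.2 (upper_pos y)

lemma one_lt_upper {y : ℝ} (hy : 0 < y) : 1 < upper y := by
  have : (2 : ℝ) ≤ √(y ^ 2 + 4) := Real.le_sqrt_of_sq_le (by nlinarith)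
  unfold upper; linarith

lemma lower_lt_one {y : ℝ} (hy : 0 < y) : lower y < 1 := by
  rw [← inv_upper]; exact inv_lt_one_of_one_lt₀ (one_lt_upper hy)

lemma upper_sub_inv (y : ℝ) : upper y - (upper y)⁻¹ = y := by
  rw [inv_upper, lower]; ring

lemma inv_sub_lower (y : ℝ) : (lower y)⁻¹ - lower y = y := by
  rw [inv_lower, lower]; ring

lemma upper_injective : Function.Injective upper :=
  Function.LeftInverse.injective (g := fun x => x - x⁻¹) upper_sub_inv

lemma lower_injective : Function.Injective lower :=
  Function.LeftInverse.injective (g := fun x => x⁻¹ - x) inv_sub_lower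

lemma upper_sub_inv_self {x : ℝ} (hx : 0 < x) : upper (x - x⁻¹) = x := by
  have hsqrt : √((x - x⁻¹) ^ 2 + 4) = x + x⁻¹ := by
    rw [show (x - x⁻¹) ^ 2 + 4 = (x + x⁻¹) ^ 2 by field_simp; ring]
    exact Real.sqrt_sq (by positivity)
  rw [upper, hsqrt]; ring

lemma lower_inv_sub_self {x : ℝ} (hx : 0 < x) : lower (x⁻¹ - x) = x := by
  have := upper_sub_inv_self (inv_pos.2 hx)
  rw [inv_inv] at this
  rw [lower, this]; ring

lemma hasDerivAt_upper (y : ℝ) : HasDerivAt upper ((1 + y / √(y ^ 2 + 4)) / 2) y := by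
  have hsqrt : HasDerivAt (fun y : ℝ => √(y ^ 2 + 4)) (y / √(y ^ 2 + 4)) y := by
    convert ((hasDerivAt_pow 2 y).add_const 4).sqrt (by positivity) using 1
    field_simp
    ring
  exact ((hasDerivAt_id y).add hsqrt).div_const 2

lemma differentiable_upper : Differentiable ℝ upper :=
  fun y => (hasDerivAt_upper y).differentiableAt

lemma differentiable_lower : Differentiable ℝ lower :=
  differentiable_upper.sub differentiable_id

lemma abs_deriv_upper_add_abs_deriv_lower (y : ℝ) :
    |deriv upper y| + |deriv lower y| = 1 := by
  have hlower : deriv lower y = deriv upper y - 1 :=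
    ((differentiable_upper y).hasDerivAt.sub (hasDerivAt_id y)).deriv
  have hratio : |y / √(y ^ 2 + 4)| < 1 := by
    rw [abs_div, abs_of_pos (Real.sqrt_pos.2 (by positivity)),
      div_lt_one (Real.sqrt_pos.2 (by positivity))]
    exact abs_lt_sqrt_sq_add_four y
  obtain ⟨hlo, hhi⟩ := abs_lt.1 hratio
  rw [hlower, (hasDerivAt_upper y).deriv, abs_of_pos (by linarith), abs_of_neg (by linarith)]
  ring

lemma disjoint_image_upper_image_lower {A : Set ℝ} (hA : A ⊆ Ioi 0) :
    Disjoint (upper '' A) (lower '' A) := by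
  rw [disjoint_left]
  rintro _ ⟨y, hy, rfl⟩ ⟨z, hz, hzy⟩
  have := lower_lt_one (hA hz)
  have := one_lt_upper (hA hy)
  linarith

lemma preimage_inter_Ioi_eq {T : ℝ → ℝ}
    (hT : ∀ x : ℝ, 0 < x → T x = if 1 ≤ x then x - 1 / x else 1 / x - x)
    {A : Set ℝ} (hA : A ⊆ Ioi 0) : T ⁻¹' A ∩ Ioi 0 = upper '' A ∪ lower '' A := by
  ext x
  simp only [mem_inter_iff, mem_preimage, mem_Ioi, mem_union, mem_image, one_div] at hT ⊢
  constructor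
  · rintro ⟨hTx, hx⟩
    rw [hT x hx] at hTx
    split_ifs at hTx
    · exact Or.inl ⟨_, hTx, upper_sub_inv_self hx⟩
    · exact Or.inr ⟨_, hTx, lower_inv_sub_self hx⟩
  · rintro (⟨y, hy, rfl⟩ | ⟨y, hy, rfl⟩)
    · have hy1 := one_lt_upper (hA hy)
      rw [hT _ (upper_pos y), if_pos hy1.le, upper_sub_inv]
      exact ⟨hy, upper_pos y⟩
    · have hy1 := lower_lt_one (hA hy)
      rw [hT _ (lower_pos y), if_neg hy1.not_ge, inv_sub_lower]
      exact ⟨hy, lower_pos y⟩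

end FoldedBoole

open FoldedBoole in
theorem folded_boole_measure_preserving
    (T : ℝ → ℝ) (hT : ∀ x : ℝ, 0 < x → T x = if 1 ≤ x then x - 1 / x else 1 / x - x)
    (A : Set ℝ) (hA : MeasurableSet A) (hA' : A ⊆ Set.Ioi 0) :
    volume (T ⁻¹' A ∩ Set.Ioi 0) = volume A := by
  rw [preimage_inter_Ioi_eq hT hA']
  exact volume_image_union_image_eq_volume hA differentiable_upper differentiable_lower
    upper_injective.injOn lower_injective.injOn (disjoint_image_upper_image_lower hA')
    fun y _ => abs_deriv_upper_add_abs_deriv_lower y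
end

section
/- The function h(x) := √(x²+4)·(√(x²+4) - x)² - 8 satisfies h(0) = 0 and h'(x) < 0 for all x > 0; in particular h(x) < 0 for all x > 0. -/
/-!
Put `y = √(x² + 4) - x`. Since `(√(x² + 4) - x)(√(x² + 4) + x) = 4`, the function is a polynomial
in `y` alone: `h x = y (y² + 4) / 2 - 8`. This polynomial is increasing for `y > 0` and vanishes at
`y = 2`, while `y` is positive, has derivative `-y / √(x² + 4) < 0`, and equals `2` at `x = 0`.
-/

open Real

section SqrtSqAddSub

variable {c : ℝ}

theorem sqrt_sq_add_sub_pos (hc : 0 < c) (x : ℝ) : 0 < √(x ^ 2 + c) - x := by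
  have : |x| < √(x ^ 2 + c) := by
    rw [← sqrt_sq_eq_abs]
    exact sqrt_lt_sqrt (sq_nonneg x) (by linarith)
  linarith [le_abs_self x]

theorem sqrt_sq_add_sub_lt_sqrt (hc : 0 < c) {x : ℝ} (hx : 0 < x) : √(x ^ 2 + c) - x < √c := by
  have hsc : √c ^ 2 = c := sq_sqrt hc.le
  rw [sub_lt_iff_lt_add, sqrt_lt' (by positivity)]
  nlinarith [sqrt_pos.mpr hc]

theorem two_mul_sqrt_sq_add_mul_sq_sub (hc : 0 ≤ c) (x : ℝ) :
    2 * (√(x ^ 2 + c) * (√(x ^ 2 + c) - x) ^ 2) =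
      (√(x ^ 2 + c) - x) * ((√(x ^ 2 + c) - x) ^ 2 + c) := by
  linear_combination (√(x ^ 2 + c) - x) * sq_sqrt (by positivity : 0 ≤ x ^ 2 + c)

theorem hasDerivAt_sqrt_sq_add_sub (hc : 0 < c) (x : ℝ) :
    HasDerivAt (fun x => √(x ^ 2 + c) - x) (-(√(x ^ 2 + c) - x) / √(x ^ 2 + c)) x := by
  have hs : √(x ^ 2 + c) ≠ 0 := (sqrt_pos.mpr (by positivity)).ne'
  refine ((((hasDerivAt_pow 2 x).add_const c).sqrt (by positivity)).sub
    (hasDerivAt_id' x)).congr_deriv ?_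
  field_simp
  ring

end SqrtSqAddSub

theorem aux_function_negative
    (h : ℝ → ℝ)
    (hdef : ∀ x : ℝ, h x = Real.sqrt (x ^ 2 + 4) * (Real.sqrt (x ^ 2 + 4) - x) ^ 2 - 8) :
    h 0 = 0 ∧ (∀ x : ℝ, 0 < x → deriv h x < 0) ∧ ∀ x : ℝ, 0 < x → h x < 0 := by
  have h_poly : h = fun x => (√(x ^ 2 + 4) - x) * ((√(x ^ 2 + 4) - x) ^ 2 + 4) / 2 - 8 := by
    ext x
    rw [hdef, ← two_mul_sqrt_sq_add_mul_sq_sub (by norm_num)]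
    ring
  have hsqrt4 : √4 = 2 := by
    rw [show (4 : ℝ) = 2 ^ 2 by norm_num, sqrt_sq zero_le_two]
  refine ⟨by rw [hdef]; norm_num [hsqrt4], fun x _ => ?_, fun x hx => ?_⟩
  · have hy' := hasDerivAt_sqrt_sq_add_sub (by norm_num : (0 : ℝ) < 4) x
    have hy'_neg : -(√(x ^ 2 + 4) - x) / √(x ^ 2 + 4) < 0 :=
      div_neg_of_neg_of_pos (neg_neg_of_pos (sqrt_sq_add_sub_pos (by norm_num) x))
        (sqrt_pos.mpr (by positivity))
    have hD : HasDerivAt h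
        (-(√(x ^ 2 + 4) - x) / √(x ^ 2 + 4) * (3 * (√(x ^ 2 + 4) - x) ^ 2 + 4) / 2) x := by
      rw [h_poly]
      refine (((hy'.mul ((hy'.pow 2).add_const 4)).div_const 2).sub_const 8).congr_deriv ?_
      simp only [Pi.pow_apply]
      ring
    rw [hD.deriv]
    exact div_neg_of_neg_of_pos (mul_neg_of_neg_of_pos hy'_neg (by positivity)) two_pos
  · have hy_pos : 0 < √(x ^ 2 + 4) - x := sqrt_sq_add_sub_pos (by norm_num) x
    have hy_lt : √(x ^ 2 + 4) - x < 2 := hsqrt4 ▸ sqrt_sq_add_sub_lt_sqrt (by norm_num) hx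
    rw [h_poly]
    nlinarith [mul_lt_mul'' hy_lt hy_lt hy_pos.le hy_pos.le]
end

section
/- For all x ∈ (0,5), 3φ₁''(x) - (φ₁'(x))² + φ₁'(x) > 0, where φ₁(x) = (-x+√(x²+4))/2, φ₁'(x) = -1/2 + x/(2√(x²+4)), φ₁''(x) = 2/(x²+4)^{3/2}. Equivalently, (x²+4)^{3/2} - √(x²+4)(2√(x²+4) - x)² + 24 > 0 for 0 < x < 5. -/
/-!
With `s = √(x² + 4)` one has `φ₁' = (x / s - 1) / 2` and `φ₁'' = 2 / s³`, and both expressions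
reduce, via `s² = x² + 4`, to multiples of `Q = 4x³ + 16x + 24 - s (4x² + 12)` by positive factors
(`1 / (4 s³)` and `1`). Positivity of `Q` amounts to `s (x² + 3) < x³ + 4x + 6`; squaring, this is
`x (-2x³ + 12x² - 17x + 48) > 0`, and the cubic factor stays positive on `[0, 5]`.
-/

open Real

local notation "φ₁" => fun y : ℝ => (-y + √(y ^ 2 + 4)) / 2

lemma hasDerivAt_sqrt_sq_add {c : ℝ} (hc : 0 < c) (y : ℝ) :
    HasDerivAt (fun y : ℝ => √(y ^ 2 + c)) (y / √(y ^ 2 + c)) y := by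
  have hinner : HasDerivAt (fun y : ℝ => y ^ 2 + c) (2 * y) y := by
    simpa using (hasDerivAt_pow 2 y).add_const c
  refine ((hasDerivAt_sqrt (by positivity)).comp y hinner).congr_deriv ?_
  field_simp

lemma deriv_φ₁ : deriv φ₁ = fun y : ℝ => (-1 + y / √(y ^ 2 + 4)) / 2 :=
  funext fun y =>
    (((hasDerivAt_id y).neg.add (hasDerivAt_sqrt_sq_add four_pos y)).div_const 2).deriv

lemma deriv_deriv_φ₁ (x : ℝ) : deriv (deriv φ₁) x = 2 / √(x ^ 2 + 4) ^ 3 := by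
  have hs : √(x ^ 2 + 4) ≠ 0 := by positivity
  have h : HasDerivAt (fun y : ℝ => (-1 + y / √(y ^ 2 + 4)) / 2)
      ((1 * √(x ^ 2 + 4) - x * (x / √(x ^ 2 + 4))) / √(x ^ 2 + 4) ^ 2 / 2) x :=
    (((hasDerivAt_id x).div (hasDerivAt_sqrt_sq_add four_pos x) hs).const_add (-1)).div_const 2
  rw [deriv_φ₁, h.deriv]
  field_simp
  rw [sq_sqrt (by positivity)]
  ring

lemma sqrt_sq_add_four_mul_lt {x : ℝ} (hx₀ : 0 < x) (hx₅ : x ≤ 5) :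
    √(x ^ 2 + 4) * (x ^ 2 + 3) < x ^ 3 + 4 * x + 6 := by
  have hcubic : 0 < -2 * x ^ 3 + 12 * x ^ 2 - 17 * x + 48 := by
    nlinarith [sq_nonneg (4 * x - 17), mul_nonneg (mul_nonneg hx₀.le hx₀.le) (sub_nonneg.2 hx₅)]
  have hsq : (√(x ^ 2 + 4) * (x ^ 2 + 3)) ^ 2 < (x ^ 3 + 4 * x + 6) ^ 2 := by
    rw [mul_pow, sq_sqrt (by positivity)]
    nlinarith [mul_pos hx₀ hcubic]
  exact lt_of_pow_lt_pow_left₀ 2 (by positivity) hsq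

theorem folded_boole_A2 (x : ℝ) (hx : x ∈ Set.Ioo (0 : ℝ) 5) :
    3 * deriv (deriv (fun y : ℝ => (-y + Real.sqrt (y ^ 2 + 4)) / 2)) x -
      (deriv (fun y : ℝ => (-y + Real.sqrt (y ^ 2 + 4)) / 2) x) ^ 2 +
      deriv (fun y : ℝ => (-y + Real.sqrt (y ^ 2 + 4)) / 2) x > 0 ∧
    (x ^ 2 + 4) ^ ((3 : ℝ) / 2) -
      Real.sqrt (x ^ 2 + 4) * (2 * Real.sqrt (x ^ 2 + 4) - x) ^ 2 + 24 > 0 := by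
  rw [deriv_deriv_φ₁, deriv_φ₁, show (3 : ℝ) / 2 = 1 / 2 + 1 by norm_num,
    rpow_add_one (by positivity), ← sqrt_eq_rpow]
  set s := √(x ^ 2 + 4)
  have hs : 0 < s := by positivity
  have hs_sq : s ^ 2 = x ^ 2 + 4 := sq_sqrt (by positivity)
  have hQ : 0 < 4 * x ^ 3 + 16 * x + 24 - s * (4 * x ^ 2 + 12) := by
    linarith [sqrt_sq_add_four_mul_lt hx.1 hx.2.le]
  constructor
  · have h : 3 * (2 / s ^ 3) - ((-1 + x / s) / 2) ^ 2 + (-1 + x / s) / 2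
        = (4 * x ^ 3 + 16 * x + 24 - s * (4 * x ^ 2 + 12)) / (4 * s ^ 3) := by
      field_simp
      linear_combination (16 * x - 12 * s) * hs_sq
    rw [h]
    positivity
  · linear_combination hQ + (4 * s - 4 * x) * hs_sq
end

section
/- Let φ₀, φ₁ : [0,∞) → ℝ be C³ functions with φ₀' ∈ (0,1), -1/2 < φ₁' < 0, φ₀' - φ₁' = 1 (hence φ₀'' = φ₁'' and φ₀''' = φ₁'''), φ₁'' - (φ₁')² > 0, and assume for each x > 0 either (a) φ₁'''(x) + φ₁''(x) > 0 and 3φ₁''(x) - (φ₁'(x))² + φ₁'(x) > 0, or (b) φ₁'''(x) + φ₁''(x) - (φ₁'(x))² > 0. Define (Lg)(x) = φ₀'(x)·g(φ₀(x)) - φ₁'(x)·g(φ₁(x)). Then if g : (0,∞) → ℝ is C², positive, with g' < 0 and g'' + g' < 0, the function Lg is also C², positive, with (Lg)' < 0 and (Lg)'' + (Lg)' < 0. -/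
/-!
Write `a = φ₁'`, so that `φ₀' = a + 1`, `φ₀'' = φ₁''` and `φ₀''' = φ₁'''`. The cone condition
`g'' + g' < 0` says that `t ↦ eᵗ g'(t)` decreases, so with `s = exp (φ₁ x - φ₀ x) ∈ (0, 1)` one
gets `g'(φ₀ x) ≤ s g'(φ₁ x)` and, integrating, `g(φ₀ x) - g(φ₁ x) ≤ (1 - s) g'(φ₁ x)`. Inserting
these bounds into the explicit formulas for `(Lg)'` and `(Lg)'' + (Lg)'` bounds each of them by
`g'(φ₁ x)` times a combination, with weights `1 - s` and `s`, of quantities that (H4) makes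
positive; the remaining terms of `(Lg)'' + (Lg)'` are multiples of `g'' + g'` at `φ₀ x` and `φ₁ x`
with coefficients of the right sign. As `g' < 0`, both expressions are negative.
-/

open Set Real Filter Topology

theorem ContDiffOn.hasDerivAt_deriv {f : ℝ → ℝ} {U : Set ℝ} {x : ℝ} {n : WithTop ℕ∞}
    (hf : ContDiffOn ℝ n f U) (hU : IsOpen U) (hn : n ≠ 0) (hx : x ∈ U) :
    HasDerivAt f (deriv f x) x :=
  ((hf.contDiffAt (hU.mem_nhds hx)).differentiableAt hn).hasDerivAt

theorem deriv_deriv_eq_of_hasDerivAt {f f' : ℝ → ℝ} {f'' x : ℝ} {U : Set ℝ} (hU : U ∈ 𝓝 x)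
    (hf : ∀ y ∈ U, HasDerivAt f (f' y) y) (hf' : HasDerivAt f' f'' x) :
    deriv (deriv f) x = f'' := by
  rw [(eventuallyEq_of_mem hU fun y hy => (hf y hy).deriv).deriv_eq]
  exact hf'.deriv

section Comparison

variable {D : Set ℝ} {f f' : ℝ → ℝ} {u v m : ℝ}

theorem antitoneOn_of_hasDerivAt_nonpos (hD : Convex ℝ D)
    (hf : ∀ t ∈ D, HasDerivAt f (f' t) t) (hf' : ∀ t ∈ D, f' t ≤ 0) : AntitoneOn f D :=
  antitoneOn_of_hasDerivWithinAt_nonpos hD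
    (fun t ht => (hf t ht).continuousAt.continuousWithinAt)
    (fun t ht => (hf t (interior_subset ht)).hasDerivWithinAt)
    (fun t ht => hf' t (interior_subset ht))

theorem le_exp_sub_mul_of_hasDerivAt (hD : Convex ℝ D) (hf : ∀ t ∈ D, HasDerivAt f (f' t) t)
    (hf' : ∀ t ∈ D, f' t + f t ≤ 0) (hu : u ∈ D) (hv : v ∈ D) (huv : u ≤ v) :
    f v ≤ exp (u - v) * f u := by
  have hanti : AntitoneOn (fun t => exp t * f t) D := by
    refine antitoneOn_of_hasDerivAt_nonpos hD (fun t ht => (hasDerivAt_exp t).mul (hf t ht))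
      fun t ht => ?_
    have := mul_nonpos_of_nonneg_of_nonpos (exp_pos t).le (hf' t ht)
    linarith
  have := hanti hu hv huv
  rw [exp_sub, div_mul_eq_mul_div, le_div_iff₀ (exp_pos v)]
  linarith

theorem sub_le_one_sub_exp_mul_of_hasDerivAt (huv : u ≤ v)
    (hf : ∀ t ∈ Icc u v, HasDerivAt f (f' t) t)
    (hf' : ∀ t ∈ Icc u v, f' t ≤ exp (u - t) * m) :
    f v - f u ≤ (1 - exp (u - v)) * m := by
  have hexp : ∀ t, HasDerivAt (fun t => m * exp (u - t)) (-(exp (u - t) * m)) t := fun t => by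
    simpa [mul_comm] using (((hasDerivAt_id t).const_sub u).exp).const_mul m
  have hanti : AntitoneOn (fun t => f t + m * exp (u - t)) (Icc u v) :=
    antitoneOn_of_hasDerivAt_nonpos (convex_Icc u v) (fun t ht => (hf t ht).add (hexp t))
      fun t ht => by linarith [hf' t ht]
  have := hanti (left_mem_Icc.mpr huv) (right_mem_Icc.mpr huv) huv
  simp only [sub_self, exp_zero] at this
  linarith

end Comparison

section Cone

variable {g : ℝ → ℝ} {D : Set ℝ} {u v : ℝ}

theorem ContDiffOn.deriv_le_exp_sub_mul_deriv (hg : ContDiffOn ℝ 2 g D) (hD : Convex ℝ D)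
    (hDo : IsOpen D) (hg'' : ∀ x ∈ D, deriv (deriv g) x + deriv g x ≤ 0)
    (hu : u ∈ D) (hv : v ∈ D) (huv : u ≤ v) :
    deriv g v ≤ Real.exp (u - v) * deriv g u :=
  le_exp_sub_mul_of_hasDerivAt hD
    (fun t ht => (hg.deriv_of_isOpen hDo (m := 1) (by norm_num)).hasDerivAt_deriv hDo
      one_ne_zero ht)
    hg'' hu hv huv

theorem ContDiffOn.sub_le_one_sub_exp_mul_deriv (hg : ContDiffOn ℝ 2 g D) (hD : Convex ℝ D)
    (hDo : IsOpen D) (hg'' : ∀ x ∈ D, deriv (deriv g) x + deriv g x ≤ 0)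
    (hu : u ∈ D) (hv : v ∈ D) (huv : u ≤ v) :
    g v - g u ≤ (1 - Real.exp (u - v)) * deriv g u := by
  have hIcc : Icc u v ⊆ D := hD.ordConnected.out hu hv
  exact sub_le_one_sub_exp_mul_of_hasDerivAt huv
    (fun t ht => hg.hasDerivAt_deriv hDo two_ne_zero (hIcc ht))
    fun t ht => hg.deriv_le_exp_sub_mul_deriv hD hDo hg'' hu (hIcc ht) ht.1

end Cone

section Branch

variable {φ g : ℝ → ℝ} {U V : Set ℝ} {x : ℝ}

theorem contDiffOn_deriv_mul_comp {n : ℕ} (hU : IsOpen U) (hφ : ContDiffOn ℝ (n + 1) φ U)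
    (hg : ContDiffOn ℝ n g V) (hφV : MapsTo φ U V) :
    ContDiffOn ℝ n (fun y => deriv φ y * g (φ y)) U :=
  (hφ.deriv_of_isOpen hU le_rfl).mul (hg.comp (hφ.of_le (by simp)) hφV)

theorem hasDerivAt_deriv_mul_comp (hU : IsOpen U) (hV : IsOpen V) (hφ : ContDiffOn ℝ 2 φ U)
    (hg : ContDiffOn ℝ 1 g V) (hφV : MapsTo φ U V) (hx : x ∈ U) :
    HasDerivAt (fun y => deriv φ y * g (φ y))
      (deriv (deriv φ) x * g (φ x) + deriv φ x ^ 2 * deriv g (φ x)) x := by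
  have hφ' := (hφ.deriv_of_isOpen hU (m := 1) (by norm_num)).hasDerivAt_deriv hU one_ne_zero hx
  have hgφ := (hg.hasDerivAt_deriv hV one_ne_zero (hφV hx)).comp x
    (hφ.hasDerivAt_deriv hU (by norm_num) hx)
  refine (hφ'.mul hgφ).congr_deriv ?_
  rw [Function.comp_apply]
  ring

theorem hasDerivAt_deriv_deriv_mul_comp (hU : IsOpen U) (hV : IsOpen V)
    (hφ : ContDiffOn ℝ 3 φ U) (hg : ContDiffOn ℝ 2 g V) (hφV : MapsTo φ U V) (hx : x ∈ U) :
    HasDerivAt (fun y => deriv (deriv φ) y * g (φ y) + deriv φ y ^ 2 * deriv g (φ y))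
      (deriv (deriv (deriv φ)) x * g (φ x) + 3 * deriv (deriv φ) x * deriv φ x * deriv g (φ x)
        + deriv φ x ^ 3 * deriv (deriv g) (φ x)) x := by
  have hφ' : ContDiffOn ℝ 2 (deriv φ) U := hφ.deriv_of_isOpen hU (by norm_num)
  have hφ'' : ContDiffOn ℝ 1 (deriv (deriv φ)) U := hφ'.deriv_of_isOpen hU (by norm_num)
  have hg' : ContDiffOn ℝ 1 (deriv g) V := hg.deriv_of_isOpen hV (by norm_num)
  have hφ₁ := hφ.hasDerivAt_deriv hU (by norm_num) hx
  have hgφ := (hg.hasDerivAt_deriv hV (by norm_num) (hφV hx)).comp x hφ₁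
  have hg'φ := (hg'.hasDerivAt_deriv hV one_ne_zero (hφV hx)).comp x hφ₁
  have hφ₂ := hφ'.hasDerivAt_deriv hU (by norm_num) hx
  have hφ₃ := hφ''.hasDerivAt_deriv hU one_ne_zero hx
  refine ((hφ₃.mul hgφ).add ((hφ₂.pow 2).mul hg'φ)).congr_deriv ?_
  simp only [Function.comp_apply, Pi.pow_apply, Nat.cast_ofNat]
  ring

end Branch

section Transfer

variable {φ₀ φ₁ g : ℝ → ℝ} {U V : Set ℝ} {x : ℝ}

theorem hasDerivAt_transfer (hU : IsOpen U) (hV : IsOpen V) (hφ₀ : ContDiffOn ℝ 2 φ₀ U)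
    (hφ₁ : ContDiffOn ℝ 2 φ₁ U) (hg : ContDiffOn ℝ 1 g V) (hφ₀V : MapsTo φ₀ U V)
    (hφ₁V : MapsTo φ₁ U V) (hx : x ∈ U) :
    HasDerivAt (fun y => deriv φ₀ y * g (φ₀ y) - deriv φ₁ y * g (φ₁ y))
      (deriv (deriv φ₀) x * g (φ₀ x) + deriv φ₀ x ^ 2 * deriv g (φ₀ x)
        - (deriv (deriv φ₁) x * g (φ₁ x) + deriv φ₁ x ^ 2 * deriv g (φ₁ x))) x :=
  (hasDerivAt_deriv_mul_comp hU hV hφ₀ hg hφ₀V hx).sub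
    (hasDerivAt_deriv_mul_comp hU hV hφ₁ hg hφ₁V hx)

theorem deriv_transfer (hU : IsOpen U) (hV : IsOpen V) (hφ₀ : ContDiffOn ℝ 3 φ₀ U)
    (hφ₁ : ContDiffOn ℝ 3 φ₁ U) (hg : ContDiffOn ℝ 2 g V) (hφ₀V : MapsTo φ₀ U V)
    (hφ₁V : MapsTo φ₁ U V) (hd : EqOn (deriv φ₀) (fun y => deriv φ₁ y + 1) U)
    (hx : x ∈ U) :
    deriv (fun y => deriv φ₀ y * g (φ₀ y) - deriv φ₁ y * g (φ₁ y)) x =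
      deriv (deriv φ₁) x * g (φ₀ x) + (deriv φ₁ x + 1) ^ 2 * deriv g (φ₀ x)
        - (deriv (deriv φ₁) x * g (φ₁ x) + deriv φ₁ x ^ 2 * deriv g (φ₁ x)) := by
  have hdd : EqOn (deriv (deriv φ₀)) (deriv (deriv φ₁)) U := by simpa using hd.deriv hU
  rw [(hasDerivAt_transfer hU hV (hφ₀.of_le (by norm_num)) (hφ₁.of_le (by norm_num))
    (hg.of_le (by norm_num)) hφ₀V hφ₁V hx).deriv, hd hx, hdd hx]

theorem deriv_deriv_transfer (hU : IsOpen U) (hV : IsOpen V) (hφ₀ : ContDiffOn ℝ 3 φ₀ U)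
    (hφ₁ : ContDiffOn ℝ 3 φ₁ U) (hg : ContDiffOn ℝ 2 g V) (hφ₀V : MapsTo φ₀ U V)
    (hφ₁V : MapsTo φ₁ U V) (hd : EqOn (deriv φ₀) (fun y => deriv φ₁ y + 1) U)
    (hx : x ∈ U) :
    deriv (deriv fun y => deriv φ₀ y * g (φ₀ y) - deriv φ₁ y * g (φ₁ y)) x =
      deriv (deriv (deriv φ₁)) x * g (φ₀ x)
        + 3 * deriv (deriv φ₁) x * (deriv φ₁ x + 1) * deriv g (φ₀ x)
        + (deriv φ₁ x + 1) ^ 3 * deriv (deriv g) (φ₀ x)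
        - (deriv (deriv (deriv φ₁)) x * g (φ₁ x)
          + 3 * deriv (deriv φ₁) x * deriv φ₁ x * deriv g (φ₁ x)
          + deriv φ₁ x ^ 3 * deriv (deriv g) (φ₁ x)) := by
  have hdd : EqOn (deriv (deriv φ₀)) (deriv (deriv φ₁)) U := by simpa using hd.deriv hU
  rw [deriv_deriv_eq_of_hasDerivAt (hU.mem_nhds hx)
    (fun y hy => hasDerivAt_transfer hU hV (hφ₀.of_le (by norm_num)) (hφ₁.of_le (by norm_num))
      (hg.of_le (by norm_num)) hφ₀V hφ₁V hy)
    ((hasDerivAt_deriv_deriv_mul_comp hU hV hφ₀ hg hφ₀V hx).sub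
      (hasDerivAt_deriv_deriv_mul_comp hU hV hφ₁ hg hφ₁V hx)), hd hx, hdd hx, hdd.deriv hU hx]

end Transfer

/- In the next three lemmas `a, b, c` stand for `φ₁', φ₁'', φ₁'''` at `x`, and `Gᵢ, pᵢ, qᵢ` for
`g, g', g''` at `φᵢ x`; `s` is `exp (φ₁ x - φ₀ x)`. -/

theorem deriv_transfer_formula_neg {a b s G₀ G₁ p₀ p₁ : ℝ} (ha : -(1 / 2) < a)
    (hb : a ^ 2 < b) (hs₀ : 0 ≤ s) (hs₁ : s < 1) (hp₁ : p₁ < 0)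
    (hG : G₀ - G₁ ≤ (1 - s) * p₁) (hp₀ : p₀ ≤ s * p₁) :
    b * G₀ + (a + 1) ^ 2 * p₀ - (b * G₁ + a ^ 2 * p₁) < 0 := by
  have hcoef : 0 < (1 - s) * (b - a ^ 2) + s * (1 + 2 * a) := by
    nlinarith [mul_pos (sub_pos.mpr hs₁) (sub_pos.mpr hb),
      mul_nonneg hs₀ (by linarith : (0 : ℝ) ≤ 1 + 2 * a)]
  have h₁ := mul_le_mul_of_nonneg_left hG (by nlinarith [sq_nonneg a] : (0 : ℝ) ≤ b)
  have h₂ := mul_le_mul_of_nonneg_left hp₀ (sq_nonneg (a + 1))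
  linarith [mul_neg_of_neg_of_pos hp₁ hcoef]

theorem deriv_deriv_add_deriv_transfer_formula_neg {a b c s G₀ G₁ p₀ p₁ q₀ q₁ : ℝ}
    (ha₀ : -1 < a) (ha₁ : a < 0) (hb : a ^ 2 < b) (hcb : 0 < c + b)
    (hK : 0 < c + b - a * (3 * b + a - a ^ 2)) (hs₀ : 0 ≤ s) (hs₁ : s < 1) (hp₁ : p₁ < 0)
    (hG : G₀ - G₁ ≤ (1 - s) * p₁) (hp₀ : p₀ ≤ s * p₁) (hq₀ : q₀ + p₀ < 0)
    (hq₁ : q₁ + p₁ < 0) :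
    c * G₀ + 3 * b * (a + 1) * p₀ + (a + 1) ^ 3 * q₀ - (c * G₁ + 3 * b * a * p₁ + a ^ 3 * q₁)
      + (b * G₀ + (a + 1) ^ 2 * p₀ - (b * G₁ + a ^ 2 * p₁)) < 0 := by
  -- The left side equals `(c + b) (G₀ - G₁) + (a + 1) (3b - a² - a) p₀ - a (3b + a - a²) p₁`
  -- `+ (a + 1)³ (q₀ + p₀) - a³ (q₁ + p₁)`.
  have hcoef₀ : 0 ≤ (a + 1) * (3 * b - a ^ 2 - a) := by nlinarith
  have hcoef : 0 < (1 - s) * (c + b - a * (3 * b + a - a ^ 2)) + s * (3 * (b - a ^ 2) - a) := by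
    nlinarith [mul_pos (sub_pos.mpr hs₁) hK,
      mul_nonneg hs₀ (by nlinarith : (0 : ℝ) ≤ 3 * (b - a ^ 2) - a)]
  have h₁ := mul_le_mul_of_nonneg_left hG hcb.le
  have h₂ := mul_le_mul_of_nonneg_left hp₀ hcoef₀
  have h₃ := mul_neg_of_pos_of_neg (pow_pos (by linarith : 0 < a + 1) 3) hq₀
  have h₄ := mul_pos_of_neg_of_neg (Odd.pow_neg (by decide) ha₁ : a ^ 3 < 0) hq₁
  linarith [mul_neg_of_neg_of_pos hp₁ hcoef]

theorem H4iii_coeff_pos {a b c : ℝ} (ha : a < 0) (hb : a ^ 2 < b)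
    (h : (c + b > 0 ∧ 3 * b - a ^ 2 + a > 0) ∨ c + b - a ^ 2 > 0) :
    0 < c + b ∧ 0 < c + b - a * (3 * b + a - a ^ 2) := by
  rcases h with ⟨hcb, h⟩ | h
  · exact ⟨hcb, by nlinarith [mul_pos (neg_pos.mpr ha) h]⟩
  · have h3b : 0 < 3 * b - a ^ 2 := by nlinarith
    exact ⟨by nlinarith [sq_nonneg a], by nlinarith [mul_pos (neg_pos.mpr ha) h3b]⟩

theorem transfer_operator_cone_invariance
    (φ₀ φ₁ : ℝ → ℝ)
    (hφ₀C : ContDiffOn ℝ 3 φ₀ (Ici 0)) (hφ₁C : ContDiffOn ℝ 3 φ₁ (Ici 0))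
    (hφ₀' : ∀ x, 0 ≤ x → deriv φ₀ x ∈ Ioo (0 : ℝ) 1)
    (hφ₁' : ∀ x, 0 ≤ x → deriv φ₁ x ∈ Ioo (-(1 / 2) : ℝ) 0)
    (hsum : ∀ x, 0 ≤ x → deriv φ₀ x - deriv φ₁ x = 1)
    (hpos₁ : ∀ x, 0 ≤ x → 0 < φ₁ x)
    (horder : ∀ x, 0 < x → φ₁ x < φ₀ x)
    (hH4ii : ∀ x, 0 < x → deriv (deriv φ₁) x - (deriv φ₁ x) ^ 2 > 0)
    (hH4iii : ∀ x, 0 < x →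
      (deriv (deriv (deriv φ₁)) x + deriv (deriv φ₁) x > 0 ∧
        3 * deriv (deriv φ₁) x - (deriv φ₁ x) ^ 2 + deriv φ₁ x > 0) ∨
      deriv (deriv (deriv φ₁)) x + deriv (deriv φ₁) x - (deriv φ₁ x) ^ 2 > 0)
    (g : ℝ → ℝ)
    (hgC : ContDiffOn ℝ 2 g (Ioi 0))
    (hgpos : ∀ x, 0 < x → 0 < g x)
    (hg' : ∀ x, 0 < x → deriv g x < 0)
    (hg'' : ∀ x, 0 < x → deriv (deriv g) x + deriv g x < 0)
    (Lg : ℝ → ℝ)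
    (hLg : ∀ x, Lg x = deriv φ₀ x * g (φ₀ x) - deriv φ₁ x * g (φ₁ x)) :
    ContDiffOn ℝ 2 Lg (Ioi 0) ∧
    (∀ x, 0 < x → 0 < Lg x) ∧
    (∀ x, 0 < x → deriv Lg x < 0) ∧
    (∀ x, 0 < x → deriv (deriv Lg) x + deriv Lg x < 0) := by
  have hU : IsOpen (Ioi (0 : ℝ)) := isOpen_Ioi
  have hφ₀U := hφ₀C.mono Ioi_subset_Ici_self
  have hφ₁U := hφ₁C.mono Ioi_subset_Ici_self
  have hφ₁pos : MapsTo φ₁ (Ioi 0) (Ioi 0) := fun x hx => hpos₁ x (le_of_lt hx)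
  have hφ₀pos : MapsTo φ₀ (Ioi 0) (Ioi 0) := fun x hx => (hφ₁pos hx).trans (horder x hx)
  have hd : EqOn (deriv φ₀) (fun y => deriv φ₁ y + 1) (Ioi 0) := fun x hx => by
    linarith [hsum x (le_of_lt hx)]
  have hg''le : ∀ x ∈ Ioi (0 : ℝ), deriv (deriv g) x + deriv g x ≤ 0 :=
    fun x hx => (hg'' x hx).le
  obtain rfl : Lg = fun y => deriv φ₀ y * g (φ₀ y) - deriv φ₁ y * g (φ₁ y) := funext hLg
  refine ⟨(contDiffOn_deriv_mul_comp hU hφ₀U hgC hφ₀pos).sub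
      (contDiffOn_deriv_mul_comp hU hφ₁U hgC hφ₁pos), fun x hx => ?_,
    forall₂_and.mp fun x hx => ?_⟩
  · exact sub_pos.mpr ((mul_neg_of_neg_of_pos (hφ₁' x hx.le).2 (hgpos _ (hφ₁pos hx))).trans
      (mul_pos (hφ₀' x hx.le).1 (hgpos _ (hφ₀pos hx))))
  have hs : 0 ≤ exp (φ₁ x - φ₀ x) ∧ exp (φ₁ x - φ₀ x) < 1 :=
    ⟨(exp_pos _).le, exp_lt_one_iff.mpr (sub_neg.mpr (horder x hx))⟩
  have hgap := hgC.sub_le_one_sub_exp_mul_deriv (convex_Ioi 0) hU hg''le (hφ₁pos hx) (hφ₀pos hx)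
    (horder x hx).le
  have hgrow := hgC.deriv_le_exp_sub_mul_deriv (convex_Ioi 0) hU hg''le (hφ₁pos hx) (hφ₀pos hx)
    (horder x hx).le
  have hb : deriv φ₁ x ^ 2 < deriv (deriv φ₁) x := sub_pos.mp (hH4ii x hx)
  obtain ⟨ha₀, ha₁⟩ := hφ₁' x hx.le
  obtain ⟨hcb, hK⟩ := H4iii_coeff_pos ha₁ hb (hH4iii x hx)
  rw [deriv_deriv_transfer hU hU hφ₀U hφ₁U hgC hφ₀pos hφ₁pos hd hx,
    deriv_transfer hU hU hφ₀U hφ₁U hgC hφ₀pos hφ₁pos hd hx]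
  exact ⟨deriv_transfer_formula_neg ha₀ hb hs.1 hs.2 (hg' _ (hφ₁pos hx)) hgap hgrow,
    deriv_deriv_add_deriv_transfer_formula_neg (by linarith) ha₁ hb hcb hK hs.1 hs.2
      (hg' _ (hφ₁pos hx)) hgap hgrow (hg'' _ (hφ₀pos hx)) (hg'' _ (hφ₁pos hx))⟩
end

section
/- Let P be the Perron-Frobenius operator of the Boole map T(x) = x - 1/x with respect to Lebesgue measure, given by (Pg)(x) = φ₊'(x) g(φ₊(x)) + |φ₋'(x)| g(φ₋(x)) with φ±(x) = x/2 ± √(x²/4+1). If g ∈ L¹(ℝ) is C² on ℝ\{0}, even, positive, and satisfies g'(x) < 0 and g''(x) + g'(x) < 0 for all x > 0, then Pg has the same properties (even, positive, C² off 0, (Pg)' < 0 and (Pg)'' + (Pg)' < 0 on (0,∞)). -/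
/-!
For even `g` the transfer operator splits as `Pg x = h x + h (-x)` with `h = φ₊' · (g ∘ φ₊)`
(`halfTransfer`, with `φ₊ = boolePhi`), and `φ₊ (-x) = (φ₊ x)⁻¹`. Since `φ₊` inverts the Boole map
`y ↦ y - y⁻¹`, its derivatives are rational functions of `y = φ₊ x`, so `(Pg)'` and `(Pg)'' + (Pg)'`
at `x > 0` are rational expressions in the values of `g, g', g''` at `y > 1` and at `y⁻¹ < 1`.
The hypothesis `g'' + g' < 0` says that `t ↦ eᵗ g'(t)` is strictly decreasing; with
`c = exp (y⁻¹ - y)` this gives `g'(y) < c g'(y⁻¹)` and `g(y) - g(y⁻¹) < (1 - c) g'(y⁻¹)`. After these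
substitutions each numerator is `g'(y⁻¹) < 0` times a polynomial in `y` and `c` that is positive for
`y > 1`, plus (for the second derivative) negative multiples of `g'' + g'`.
-/

open Set MeasureTheory Real

noncomputable def boolePhi (x : ℝ) : ℝ := x / 2 + Real.sqrt (x ^ 2 / 4 + 1)

-- The derivatives of `boolePhi` at `x`, as functions of `y = boolePhi x`.
noncomputable def boolePhiDeriv (y : ℝ) : ℝ := y ^ 2 / (y ^ 2 + 1)

noncomputable def boolePhiDeriv2 (y : ℝ) : ℝ := 2 * y ^ 3 / (y ^ 2 + 1) ^ 3

noncomputable def boolePhiDeriv3 (y : ℝ) : ℝ := -(6 * y ^ 4 * (y ^ 2 - 1)) / (y ^ 2 + 1) ^ 5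

lemma boolePhi_mul_boolePhi_neg (x : ℝ) : boolePhi x * boolePhi (-x) = 1 := by
  simp only [boolePhi, neg_sq]
  linear_combination Real.sq_sqrt (show 0 ≤ x ^ 2 / 4 + 1 by positivity)

lemma boolePhi_pos (x : ℝ) : 0 < boolePhi x := by
  have hsum : boolePhi x + boolePhi (-x) = 2 * Real.sqrt (x ^ 2 / 4 + 1) := by
    simp only [boolePhi, neg_sq]; ring
  have hs : 0 < Real.sqrt (x ^ 2 / 4 + 1) := Real.sqrt_pos.2 (by positivity)
  nlinarith [boolePhi_mul_boolePhi_neg x]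

lemma boolePhi_neg (x : ℝ) : boolePhi (-x) = (boolePhi x)⁻¹ :=
  eq_inv_of_mul_eq_one_right (boolePhi_mul_boolePhi_neg x)

lemma boolePhi_sub_inv (x : ℝ) : boolePhi x - (boolePhi x)⁻¹ = x := by
  rw [← boolePhi_neg]; simp only [boolePhi, neg_sq]; ring

lemma boolePhi_sub_inv_of_pos {t : ℝ} (ht : 0 < t) : boolePhi (t - t⁻¹) = t := by
  have hsq : (t - t⁻¹) ^ 2 / 4 + 1 = ((t + t⁻¹) / 2) ^ 2 := by field_simp; ring
  rw [boolePhi, hsq, Real.sqrt_sq (by positivity)]; ring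

lemma range_boolePhi : range boolePhi = Ioi 0 :=
  Subset.antisymm (range_subset_iff.2 boolePhi_pos)
    fun _ ht => ⟨_, boolePhi_sub_inv_of_pos ht⟩

lemma boolePhi_injective : Function.Injective boolePhi :=
  Function.LeftInverse.injective (g := fun y => y - y⁻¹) boolePhi_sub_inv

lemma one_lt_boolePhi {x : ℝ} (hx : 0 < x) : 1 < boolePhi x := by
  have hy := boolePhi_pos x
  nlinarith [boolePhi_sub_inv x, mul_inv_cancel₀ hy.ne']

lemma contDiff_boolePhi {n : WithTop ℕ∞} : ContDiff ℝ n boolePhi :=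
  (contDiff_id.div_const 2).add
    ((((contDiff_id.pow 2).div_const 4).add contDiff_const).sqrt fun _ => by positivity)

lemma contDiff_boolePhiDeriv {n : WithTop ℕ∞} : ContDiff ℝ n boolePhiDeriv :=
  (contDiff_id.pow 2).div ((contDiff_id.pow 2).add contDiff_const) fun _ => by positivity

lemma boolePhiDeriv_pos {y : ℝ} (hy : 0 < y) : 0 < boolePhiDeriv y := by
  unfold boolePhiDeriv; positivity

-- Inverse function theorem: `boolePhi` inverts the Boole map `y ↦ y - y⁻¹`.
lemma hasDerivAt_boolePhi (x : ℝ) : HasDerivAt boolePhi (boolePhiDeriv (boolePhi x)) x := by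
  have hy := boolePhi_pos x
  have hT : HasDerivAt (fun y => y - y⁻¹) (1 + (boolePhi x ^ 2)⁻¹) (boolePhi x) := by
    simpa using (hasDerivAt_id' _).fun_sub (hasDerivAt_inv hy.ne')
  refine (hT.of_local_left_inverse (contDiff_boolePhi (n := 0)).continuous.continuousAt (by positivity)
    (Filter.Eventually.of_forall boolePhi_sub_inv)).congr_deriv ?_
  rw [boolePhiDeriv]; field_simp

lemma HasDerivAt.comp_boolePhi {F : ℝ → ℝ} {F' x : ℝ} (hF : HasDerivAt F F' (boolePhi x)) :
    HasDerivAt (fun x => F (boolePhi x)) (F' * boolePhiDeriv (boolePhi x)) x :=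
  hF.comp x (hasDerivAt_boolePhi x)

lemma hasDerivAt_boolePhiDeriv_comp (x : ℝ) :
    HasDerivAt (fun x => boolePhiDeriv (boolePhi x)) (boolePhiDeriv2 (boolePhi x)) x := by
  have hy := boolePhi_pos x
  have hd : HasDerivAt boolePhiDeriv _ (boolePhi x) :=
    (hasDerivAt_pow 2 _).fun_div ((hasDerivAt_pow 2 _).add_const 1) (by positivity)
  convert hd.comp_boolePhi using 1
  unfold boolePhiDeriv boolePhiDeriv2; field_simp; ring

lemma hasDerivAt_boolePhiDeriv2_comp (x : ℝ) :
    HasDerivAt (fun x => boolePhiDeriv2 (boolePhi x)) (boolePhiDeriv3 (boolePhi x)) x := by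
  have hy := boolePhi_pos x
  have hd : HasDerivAt boolePhiDeriv2 _ (boolePhi x) :=
    ((hasDerivAt_pow 3 _).const_mul 2).fun_div (((hasDerivAt_pow 2 _).add_const 1).pow 3)
      (by positivity)
  convert hd.comp_boolePhi using 1
  rw [boolePhiDeriv, boolePhiDeriv3]; field_simp; ring

noncomputable def halfTransfer (g : ℝ → ℝ) (x : ℝ) : ℝ :=
  boolePhiDeriv (boolePhi x) * g (boolePhi x)

-- The transfer operator of the Boole map, applied to an even density `g`.
noncomputable def booleTransfer (g : ℝ → ℝ) (x : ℝ) : ℝ :=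
  halfTransfer g x + halfTransfer g (-x)

noncomputable def halfTransferDeriv (g : ℝ → ℝ) (y : ℝ) : ℝ :=
  boolePhiDeriv2 y * g y + boolePhiDeriv y ^ 2 * deriv g y

noncomputable def halfTransferDeriv2 (g : ℝ → ℝ) (y : ℝ) : ℝ :=
  boolePhiDeriv3 y * g y + 3 * boolePhiDeriv2 y * boolePhiDeriv y * deriv g y
    + boolePhiDeriv y ^ 3 * deriv (deriv g) y

lemma booleTransfer_eq {g : ℝ → ℝ} (hg : ∀ x, g (-x) = g x) (x : ℝ) :
    deriv boolePhi x * g (boolePhi x)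
      + |deriv (fun x => -boolePhi (-x)) x| * g (-boolePhi (-x)) = booleTransfer g x := by
  have hm : HasDerivAt (fun x => -boolePhi (-x)) (boolePhiDeriv (boolePhi (-x))) x := by
    simpa using ((hasDerivAt_boolePhi (-x)).comp x (hasDerivAt_neg x)).fun_neg
  rw [(hasDerivAt_boolePhi x).deriv, hm.deriv, abs_of_pos (boolePhiDeriv_pos (boolePhi_pos _)),
    hg, booleTransfer, halfTransfer, halfTransfer]

lemma booleTransfer_neg (g : ℝ → ℝ) (x : ℝ) : booleTransfer g (-x) = booleTransfer g x := by
  rw [booleTransfer, booleTransfer, neg_neg, add_comm]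

lemma booleTransfer_pos {g : ℝ → ℝ} (hg : ∀ x, 0 < g x) (x : ℝ) : 0 < booleTransfer g x :=
  add_pos (mul_pos (boolePhiDeriv_pos (boolePhi_pos _)) (hg _))
    (mul_pos (boolePhiDeriv_pos (boolePhi_pos _)) (hg _))

lemma integrable_halfTransfer {g : ℝ → ℝ} (hg : IntegrableOn g (Ioi 0)) :
    Integrable (halfTransfer g) := by
  have h := (integrableOn_image_iff_integrableOn_abs_deriv_smul MeasurableSet.univ
    (fun x _ => (hasDerivAt_boolePhi x).hasDerivWithinAt) boolePhi_injective.injOn g).1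
  rw [image_univ, range_boolePhi, integrableOn_univ] at h
  convert h hg using 2 with x
  rw [halfTransfer, abs_of_pos (boolePhiDeriv_pos (boolePhi_pos x)), smul_eq_mul]

lemma integrable_booleTransfer {g : ℝ → ℝ} (hg : IntegrableOn g (Ioi 0)) :
    Integrable (booleTransfer g) :=
  (integrable_halfTransfer hg).add (integrable_halfTransfer hg).comp_neg

lemma contDiff_halfTransfer {g : ℝ → ℝ} {n : WithTop ℕ∞} (hg : ContDiffOn ℝ n g (Ioi 0)) :
    ContDiff ℝ n (halfTransfer g) :=
  (contDiff_boolePhiDeriv.comp contDiff_boolePhi).mul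
    (hg.comp_contDiff contDiff_boolePhi boolePhi_pos)

lemma contDiff_booleTransfer {g : ℝ → ℝ} {n : WithTop ℕ∞} (hg : ContDiffOn ℝ n g (Ioi 0)) :
    ContDiff ℝ n (booleTransfer g) :=
  (contDiff_halfTransfer hg).add ((contDiff_halfTransfer hg).comp contDiff_neg)

lemma hasDerivAt_halfTransfer {g : ℝ → ℝ} {x : ℝ} (hg : DifferentiableAt ℝ g (boolePhi x)) :
    HasDerivAt (halfTransfer g) (halfTransferDeriv g (boolePhi x)) x := by
  refine ((hasDerivAt_boolePhiDeriv_comp x).mul hg.hasDerivAt.comp_boolePhi).congr_deriv ?_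
  rw [halfTransferDeriv]; ring

lemma hasDerivAt_halfTransferDeriv_comp {g : ℝ → ℝ} {x : ℝ}
    (hg : DifferentiableAt ℝ g (boolePhi x)) (hg' : DifferentiableAt ℝ (deriv g) (boolePhi x)) :
    HasDerivAt (fun x => halfTransferDeriv g (boolePhi x))
      (halfTransferDeriv2 g (boolePhi x)) x := by
  refine (((hasDerivAt_boolePhiDeriv2_comp x).mul hg.hasDerivAt.comp_boolePhi).add
    (((hasDerivAt_boolePhiDeriv_comp x).fun_pow 2).mul hg'.hasDerivAt.comp_boolePhi)).congr_deriv ?_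
  rw [halfTransferDeriv2]; ring

section
variable {g : ℝ → ℝ} (hg : DifferentiableOn ℝ g (Ioi 0))
include hg

lemma deriv_booleTransfer (x : ℝ) :
    deriv (booleTransfer g) x
      = halfTransferDeriv g (boolePhi x) - halfTransferDeriv g (boolePhi (-x)) := by
  have hd : ∀ x, HasDerivAt (halfTransfer g) (halfTransferDeriv g (boolePhi x)) x := fun x =>
    hasDerivAt_halfTransfer (hg.differentiableAt (Ioi_mem_nhds (boolePhi_pos x)))
  exact (((hd x).add ((hd (-x)).comp x (hasDerivAt_neg x))).congr_deriv (by ring)).deriv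

lemma hasDerivAt_deriv_booleTransfer (hg' : DifferentiableOn ℝ (deriv g) (Ioi 0)) (x : ℝ) :
    HasDerivAt (deriv (booleTransfer g))
      (halfTransferDeriv2 g (boolePhi x) + halfTransferDeriv2 g (boolePhi (-x))) x := by
  have hd : ∀ x, HasDerivAt (fun x => halfTransferDeriv g (boolePhi x))
      (halfTransferDeriv2 g (boolePhi x)) x := fun x =>
    hasDerivAt_halfTransferDeriv_comp (hg.differentiableAt (Ioi_mem_nhds (boolePhi_pos x)))
      (hg'.differentiableAt (Ioi_mem_nhds (boolePhi_pos x)))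
  exact (((hd x).sub ((hd (-x)).comp x (hasDerivAt_neg x))).congr_deriv (by ring))
    |>.congr_of_eventuallyEq (Filter.Eventually.of_forall (deriv_booleTransfer hg))

end

section
variable {f : ℝ → ℝ} (hf' : DifferentiableOn ℝ (deriv f) (Ioi 0))
  (hf'' : ∀ x, 0 < x → deriv (deriv f) x + deriv f x < 0)
include hf' hf''

lemma strictAntiOn_exp_mul_deriv : StrictAntiOn (fun t => exp t * deriv f t) (Ioi 0) := by
  refine strictAntiOn_of_deriv_neg (convex_Ioi 0)
    (continuous_exp.continuousOn.mul hf'.continuousOn) fun t ht => ?_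
  rw [interior_Ioi] at ht
  rw [((hasDerivAt_exp t).fun_mul (hf'.differentiableAt (Ioi_mem_nhds ht)).hasDerivAt).deriv]
  nlinarith [exp_pos t, hf'' t ht]

lemma deriv_lt_exp_sub_mul_deriv {u t : ℝ} (hu : 0 < u) (hut : u < t) :
    deriv f t < exp (u - t) * deriv f u := by
  have h : exp t * deriv f t < exp u * deriv f u :=
    strictAntiOn_exp_mul_deriv hf' hf'' hu (hu.trans hut) hut
  rw [exp_sub, div_mul_eq_mul_div, lt_div_iff₀ (exp_pos t)]
  linarith

lemma sub_lt_deriv_mul_one_sub_exp (hf : DifferentiableOn ℝ f (Ioi 0)) {u t : ℝ} (hu : 0 < u)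
    (hut : u < t) : f t - f u < deriv f u * (1 - exp (u - t)) := by
  have hanti : StrictAntiOn (fun r => f r + deriv f u * exp (u - r)) (Ici u) := by
    refine strictAntiOn_of_deriv_neg (convex_Ici u)
      ((hf.continuousOn.mono (Ici_subset_Ioi.2 hu)).add (by fun_prop)) fun r hr => ?_
    rw [interior_Ici] at hr
    have hexp : HasDerivAt (fun r => exp (u - r)) (-exp (u - r)) r := by
      simpa using ((hasDerivAt_id' r).const_sub u).exp
    rw [((hf.differentiableAt (Ioi_mem_nhds (hu.trans hr))).hasDerivAt.fun_add
      (hexp.const_mul _)).deriv]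
    nlinarith [deriv_lt_exp_sub_mul_deriv hf' hf'' hu hr]
  have h := hanti self_mem_Ici (mem_Ici.2 hut.le) hut
  simp only [sub_self, exp_zero, mul_one] at h
  linarith

end

lemma numerator_deriv_neg {y c G Δ a : ℝ} (hy : 1 < y) (hc : 0 < c) (hG : G < 0)
    (hΔ : Δ ≤ G * (1 - c)) (ha : a < c * G) :
    2 * y ^ 3 * Δ + y ^ 4 * (y ^ 2 + 1) * a - (y ^ 2 + 1) * G < 0 := by
  have ht : 0 < y - 1 := sub_pos.2 hy
  have hA : 0 < 2 * y ^ 3 - (y ^ 2 + 1) := by nlinarith [pow_pos ht 3, sq_nonneg (y - 1)]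
  have hB : 0 < y ^ 4 * (y ^ 2 + 1) - 2 * y ^ 3 := by
    nlinarith [pow_pos ht 3, pow_pos ht 2, pow_pos (one_pos.trans hy) 3]
  have f1 : 2 * y ^ 3 * Δ ≤ 2 * y ^ 3 * (G * (1 - c)) :=
    mul_le_mul_of_nonneg_left hΔ (by positivity)
  have f2 : y ^ 4 * (y ^ 2 + 1) * a < y ^ 4 * (y ^ 2 + 1) * (c * G) :=
    mul_lt_mul_of_pos_left ha (by positivity)
  have f3 : G * ((2 * y ^ 3 - (y ^ 2 + 1)) + c * (y ^ 4 * (y ^ 2 + 1) - 2 * y ^ 3)) < 0 :=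
    mul_neg_of_neg_of_pos hG (add_pos hA (mul_pos hc hB))
  nlinarith

lemma numerator_deriv2_add_deriv_neg {y c G Δ a k k' : ℝ} (hy : 1 < y) (hc : 0 < c)
    (hG : G < 0) (hΔ : Δ ≤ G * (1 - c)) (ha : a < c * G) (hk : k < 0) (hk' : k' < 0) :
    (-(6 * y ^ 4 * (y ^ 2 - 1)) + 2 * y ^ 3 * (y ^ 2 + 1) ^ 2) * Δ
      + (6 * y ^ 5 * (y ^ 2 + 1) + y ^ 4 * (y ^ 2 + 1) ^ 3 - y ^ 6 * (y ^ 2 + 1) ^ 2) * a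
      + (6 * y ^ 3 * (y ^ 2 + 1) - (y ^ 2 + 1) ^ 3 - (y ^ 2 + 1) ^ 2) * G
      + y ^ 6 * (y ^ 2 + 1) ^ 2 * k + (y ^ 2 + 1) ^ 2 * k' < 0 := by
  have ht : 0 < y - 1 := sub_pos.2 hy
  have hy0 : 0 < y := one_pos.trans hy
  set Q : ℝ := -(6 * y ^ 4 * (y ^ 2 - 1)) + 2 * y ^ 3 * (y ^ 2 + 1) ^ 2 with hQ
  set C₁ : ℝ := 6 * y ^ 5 * (y ^ 2 + 1) + y ^ 4 * (y ^ 2 + 1) ^ 3 - y ^ 6 * (y ^ 2 + 1) ^ 2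
    with hC₁
  set C₂ : ℝ := 6 * y ^ 3 * (y ^ 2 + 1) - (y ^ 2 + 1) ^ 3 - (y ^ 2 + 1) ^ 2 with hC₂
  have hQpos : 0 < Q := by
    have hquartic : 0 < y ^ 4 - 3 * y ^ 3 + 2 * y ^ 2 + 3 * y + 1 := by
      nlinarith [sq_nonneg ((y - 1) ^ 2 - 1), pow_pos ht 3]
    rw [hQ, show -(6 * y ^ 4 * (y ^ 2 - 1)) + 2 * y ^ 3 * (y ^ 2 + 1) ^ 2
      = 2 * y ^ 3 * (y ^ 4 - 3 * y ^ 3 + 2 * y ^ 2 + 3 * y + 1) by ring]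
    positivity
  have hQC₂ : 0 < Q + C₂ := by
    rw [hQ, hC₂]
    nlinarith [pow_pos ht 7, pow_pos ht 6, pow_pos ht 5, pow_pos ht 4, pow_pos ht 3,
      pow_pos ht 2]
  have hC₁Q : 0 < C₁ - Q := by
    rw [hC₁, hQ]
    nlinarith [pow_pos ht 8, pow_pos ht 7, pow_pos ht 6, pow_pos ht 5, pow_pos ht 4,
      pow_pos ht 3, pow_pos ht 2]
  have f1 : Q * Δ ≤ Q * (G * (1 - c)) := mul_le_mul_of_nonneg_left hΔ hQpos.le
  have f2 : C₁ * a < C₁ * (c * G) := mul_lt_mul_of_pos_left ha (by linarith)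
  have f3 : G * ((Q + C₂) + c * (C₁ - Q)) < 0 :=
    mul_neg_of_neg_of_pos hG (add_pos hQC₂ (mul_pos hc hC₁Q))
  have f4 : y ^ 6 * (y ^ 2 + 1) ^ 2 * k < 0 := mul_neg_of_pos_of_neg (by positivity) hk
  have f5 : (y ^ 2 + 1) ^ 2 * k' < 0 := mul_neg_of_pos_of_neg (by positivity) hk'
  nlinarith

section
variable {g : ℝ → ℝ} (hg : DifferentiableOn ℝ g (Ioi 0))
  (hg' : DifferentiableOn ℝ (deriv g) (Ioi 0)) (hg'neg : ∀ x, 0 < x → deriv g x < 0)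
  (hg'' : ∀ x, 0 < x → deriv (deriv g) x + deriv g x < 0)
include hg hg' hg'neg hg''

lemma halfTransferDeriv_sub_inv_neg {y : ℝ} (hy : 1 < y) :
    halfTransferDeriv g y - halfTransferDeriv g y⁻¹ < 0 := by
  have hy0 : 0 < y := one_pos.trans hy
  have hu : 0 < y⁻¹ := inv_pos.2 hy0
  have huy : y⁻¹ < y := (inv_lt_one_of_one_lt₀ hy).trans hy
  have hnum := numerator_deriv_neg hy (exp_pos (y⁻¹ - y)) (hg'neg _ hu)
    (sub_lt_deriv_mul_one_sub_exp hg' hg'' hg hu huy).le (deriv_lt_exp_sub_mul_deriv hg' hg'' hu huy)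
  have hform : halfTransferDeriv g y - halfTransferDeriv g y⁻¹
      = (2 * y ^ 3 * (g y - g y⁻¹) + y ^ 4 * (y ^ 2 + 1) * deriv g y
          - (y ^ 2 + 1) * deriv g y⁻¹) / (y ^ 2 + 1) ^ 3 := by
    simp only [halfTransferDeriv, boolePhiDeriv, boolePhiDeriv2]
    field_simp
    ring
  rw [hform]
  exact div_neg_of_neg_of_pos hnum (by positivity)

lemma halfTransferDeriv2_add_inv_add_neg {y : ℝ} (hy : 1 < y) :
    halfTransferDeriv2 g y + halfTransferDeriv2 g y⁻¹
      + (halfTransferDeriv g y - halfTransferDeriv g y⁻¹) < 0 := by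
  have hy0 : 0 < y := one_pos.trans hy
  have hu : 0 < y⁻¹ := inv_pos.2 hy0
  have huy : y⁻¹ < y := (inv_lt_one_of_one_lt₀ hy).trans hy
  have hnum := numerator_deriv2_add_deriv_neg hy (exp_pos (y⁻¹ - y)) (hg'neg _ hu)
    (sub_lt_deriv_mul_one_sub_exp hg' hg'' hg hu huy).le (deriv_lt_exp_sub_mul_deriv hg' hg'' hu huy)
    (hg'' y hy0) (hg'' _ hu)
  have hform : halfTransferDeriv2 g y + halfTransferDeriv2 g y⁻¹
      + (halfTransferDeriv g y - halfTransferDeriv g y⁻¹)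
      = ((-(6 * y ^ 4 * (y ^ 2 - 1)) + 2 * y ^ 3 * (y ^ 2 + 1) ^ 2) * (g y - g y⁻¹)
          + (6 * y ^ 5 * (y ^ 2 + 1) + y ^ 4 * (y ^ 2 + 1) ^ 3
              - y ^ 6 * (y ^ 2 + 1) ^ 2) * deriv g y
          + (6 * y ^ 3 * (y ^ 2 + 1) - (y ^ 2 + 1) ^ 3 - (y ^ 2 + 1) ^ 2) * deriv g y⁻¹
          + y ^ 6 * (y ^ 2 + 1) ^ 2 * (deriv (deriv g) y + deriv g y)
          + (y ^ 2 + 1) ^ 2 * (deriv (deriv g) y⁻¹ + deriv g y⁻¹)) / (y ^ 2 + 1) ^ 5 := by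
    simp only [halfTransferDeriv, halfTransferDeriv2, boolePhiDeriv, boolePhiDeriv2,
      boolePhiDeriv3]
    field_simp
    ring
  rw [hform]
  exact div_neg_of_neg_of_pos hnum (by positivity)

end

theorem boole_transfer_cone_invariance
    (g : ℝ → ℝ) (hgInt : Integrable g)
    (hgC : ContDiffOn ℝ 2 g ({0}ᶜ : Set ℝ))
    (hgeven : ∀ x, g (-x) = g x)
    (hgpos : ∀ x, 0 < g x)
    (hg' : ∀ x, 0 < x → deriv g x < 0)
    (hg'' : ∀ x, 0 < x → deriv (deriv g) x + deriv g x < 0)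
    (φp φm : ℝ → ℝ)
    (hφp : ∀ x, φp x = x / 2 + Real.sqrt (x ^ 2 / 4 + 1))
    (hφm : ∀ x, φm x = x / 2 - Real.sqrt (x ^ 2 / 4 + 1))
    (Pg : ℝ → ℝ)
    (hPg : ∀ x, Pg x = deriv φp x * g (φp x) + |deriv φm x| * g (φm x)) :
    Integrable Pg ∧
    ContDiffOn ℝ 2 Pg ({0}ᶜ : Set ℝ) ∧
    (∀ x, Pg (-x) = Pg x) ∧
    (∀ x, 0 < Pg x) ∧
    (∀ x, 0 < x → deriv Pg x < 0) ∧
    (∀ x, 0 < x → deriv (deriv Pg) x + deriv Pg x < 0) := by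
  have hφm' : φm = fun x => -boolePhi (-x) := funext fun x => by
    rw [hφm, boolePhi, neg_sq]; ring
  obtain rfl : Pg = booleTransfer g := funext fun x => by
    rw [hPg, (funext hφp : φp = boolePhi), hφm', booleTransfer_eq hgeven]
  have hgCpos : ContDiffOn ℝ 2 g (Ioi 0) := hgC.mono fun x hx => ne_of_gt hx
  have hg₁ : DifferentiableOn ℝ g (Ioi 0) := hgCpos.differentiableOn (by norm_num)
  have hg₂ : DifferentiableOn ℝ (deriv g) (Ioi 0) :=
    (hgCpos.deriv_of_isOpen (m := 1) isOpen_Ioi (by norm_num)).differentiableOn (by norm_num)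
  refine ⟨integrable_booleTransfer hgInt.integrableOn, (contDiff_booleTransfer hgCpos).contDiffOn,
    booleTransfer_neg g, booleTransfer_pos hgpos, fun x hx => ?_, fun x hx => ?_⟩
  · rw [deriv_booleTransfer hg₁, boolePhi_neg]
    exact halfTransferDeriv_sub_inv_neg hg₁ hg₂ hg' hg'' (one_lt_boolePhi hx)
  · rw [(hasDerivAt_deriv_booleTransfer hg₁ hg₂ x).deriv, deriv_booleTransfer hg₁, boolePhi_neg]
    exact halfTransferDeriv2_add_inv_add_neg hg₁ hg₂ hg' hg'' (one_lt_boolePhi hx)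
end

section
/- Let g : ℝ → ℝ be even, positive, strictly decreasing on (0,∞), integrable with ∫ g dm ≤ 1. Fix ā > 0 and set γ(x) := min{g(ā), g(x)}. If F : ℝ → ℝ is bounded measurable with |∫_{-a}^{a} F dm| ≤ ε·a for all a ≥ ā, then |∫_ℝ F·γ dm| ≤ (ε/2)·∫ γ dm ≤ ε/2. -/
/-!
Slice the weight `γ` into horizontal layers: by Fubini,
`∫ F γ = ∫_{r > 0} (∫_{γ > r} F) dr`, and by Cavalieri `∫ γ = ∫_{r > 0} |{γ > r}| dr`, so it
suffices to bound `∫_{γ > r} F` by `ε/2 · |{γ > r}|` layer by layer. Since `g` is even and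
decreasing on `(0, ∞)`, the layer `{γ > r}` is empty for `r ≥ g ā` and otherwise agrees a.e. with
a symmetric interval `(-a, a)` with `a = sup {g > r} ≥ ā`, where the hypothesis on `F` applies.
-/

open Set MeasureTheory Filter

section Layercake

variable {α : Type*} [MeasurableSpace α] {μ : Measure α} {F γ : α → ℝ}

theorem integral_mul_eq_integral_setIntegral_superlevel [SFinite μ]
    (hF : AEStronglyMeasurable F μ) (hγm : AEMeasurable γ μ) (hγ0 : 0 ≤ᵐ[μ] γ)
    (hFγ : Integrable (fun x => F x * γ x) μ) :
    ∫ x, F x * γ x ∂μ = ∫ r in Ioi 0, ∫ x in {x | r < γ x}, F x ∂μ := by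
  set f : α → ℝ → ℝ := fun x r => (Ioo 0 (γ x)).indicator (fun _ => F x) r
  have hlayer : ∀ x, 0 ≤ γ x → ∀ c : ℝ, ∫ r, (Ioo 0 (γ x)).indicator (fun _ => c) r = c * γ x :=
    fun x hx c => by
      rw [integral_indicator_const _ measurableSet_Ioo, Real.volume_real_Ioo_of_le hx, sub_zero,
        smul_eq_mul, mul_comm]
  have hslice : ∀ r, 0 < r → ∫ x, f x r ∂μ = ∫ x in {x | r < γ x}, F x ∂μ := fun r hr => by
    rw [← integral_indicator₀ (nullMeasurableSet_lt aemeasurable_const hγm)]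
    congr 1 with x
    by_cases h : r < γ x <;> simp [f, h, hr]
  have hf_meas : AEStronglyMeasurable (Function.uncurry f) (μ.prod volume) := by
    have hT : NullMeasurableSet {p : α × ℝ | 0 < p.2 ∧ p.2 < γ p.1} (μ.prod volume) :=
      (nullMeasurableSet_lt aemeasurable_const measurable_snd.aemeasurable).inter
        (nullMeasurableSet_lt measurable_snd.aemeasurable
          (hγm.comp_quasiMeasurePreserving Measure.quasiMeasurePreserving_fst))
    convert hF.comp_fst.indicator₀ hT using 1
    ext ⟨x, r⟩
    simp [f, indicator, Function.uncurry]
  have hf_int : Integrable (Function.uncurry f) (μ.prod volume) := by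
    refine (integrable_prod_iff hf_meas).2 ⟨ae_of_all _ fun x => ?_, hFγ.norm.congr ?_⟩
    · exact (integrableOn_const (s := Ioo 0 (γ x)) (μ := volume) (C := F x) (by simp)
        (by simp)).integrable_indicator measurableSet_Ioo
    · filter_upwards [hγ0] with x hx
      rw [norm_mul, Real.norm_of_nonneg hx, ← hlayer x hx]
      exact integral_congr_ae (ae_of_all _ fun r => (norm_indicator_eq_indicator_norm _ r).symm)
  calc ∫ x, F x * γ x ∂μ = ∫ x, (∫ r, f x r) ∂μ :=
        integral_congr_ae (by filter_upwards [hγ0] with x hx using (hlayer x hx (F x)).symm)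
    _ = ∫ r, ∫ x, f x r ∂μ := integral_integral_swap hf_int
    _ = ∫ r in Ioi 0, ∫ x in {x | r < γ x}, F x ∂μ := by
      rw [← setIntegral_eq_integral_of_forall_compl_eq_zero (s := Ioi 0)]
      · exact setIntegral_congr_fun measurableSet_Ioi hslice
      · intro r hr
        have hr0 : ∀ x, f x r = 0 := fun x => indicator_of_notMem (fun h => hr h.1) _
        simp only [hr0, integral_zero]

theorem integrableOn_measureReal_superlevel (hγ : Integrable γ μ) (hγ0 : 0 ≤ᵐ[μ] γ) :
    IntegrableOn (fun t => μ.real {x | t < γ x}) (Ioi 0) := by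
  have hmeas : Measurable fun t => μ.real {x | t < γ x} :=
    (Antitone.measurable (f := fun t => μ {x | t < γ x})
      fun _ _ hst => measure_mono fun _ h => hst.trans_lt h).ennreal_toReal
  refine ⟨hmeas.aestronglyMeasurable, (hasFiniteIntegral_iff_ofReal
    (ae_of_all _ fun _ => measureReal_nonneg)).2 ?_⟩
  calc ∫⁻ t in Ioi 0, ENNReal.ofReal (μ.real {x | t < γ x})
      = ∫⁻ t in Ioi 0, μ {x | t < γ x} := setLIntegral_congr_fun measurableSet_Ioi fun t ht =>
        ENNReal.ofReal_toReal (hγ.measure_gt_lt_top ht).ne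
    _ = ∫⁻ x, ENNReal.ofReal (γ x) ∂μ := (lintegral_eq_lintegral_meas_lt μ hγ0 hγ.aemeasurable).symm
    _ < ⊤ := hγ.lintegral_lt_top

theorem abs_integral_mul_le_of_abs_setIntegral_superlevel_le [SFinite μ]
    (hF : AEStronglyMeasurable F μ) (hγ : Integrable γ μ) (hγ0 : 0 ≤ᵐ[μ] γ)
    (hFγ : Integrable (fun x => F x * γ x) μ) {c : ℝ}
    (h : ∀ r, 0 < r → |∫ x in {x | r < γ x}, F x ∂μ| ≤ c * μ.real {x | r < γ x}) :
    |∫ x, F x * γ x ∂μ| ≤ c * ∫ x, γ x ∂μ := by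
  rw [integral_mul_eq_integral_setIntegral_superlevel hF hγ.aemeasurable hγ0 hFγ,
    hγ.integral_eq_integral_meas_lt hγ0, ← integral_const_mul, ← Real.norm_eq_abs]
  exact norm_integral_le_of_norm_le ((integrableOn_measureReal_superlevel hγ hγ0).const_mul c)
    ((ae_restrict_iff' measurableSet_Ioi).2 (ae_of_all _ h))

end Layercake

section SymmetricDecreasing

variable {g : ℝ → ℝ} {r : ℝ}

theorem bddAbove_superlevel_of_antitoneOn (hg : Integrable g) (hanti : AntitoneOn g (Ioi 0))
    (hr : 0 < r) : BddAbove {x | r < g x} := by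
  by_contra hunbdd
  rw [not_bddAbove_iff] at hunbdd
  have hIoi : Ioi 0 ⊆ {x | r < g x} := fun y hy => by
    obtain ⟨x, hx, hyx⟩ := hunbdd y
    exact hx.trans_le (hanti hy (mem_Ioi.2 (hy.trans hyx)) hyx.le)
  exact (hg.measure_gt_lt_top hr).ne (measure_mono_top hIoi Real.volume_Ioi)

theorem superlevel_ae_eq_Ioo_sSup (heven : ∀ x, g (-x) = g x) (hanti : AntitoneOn g (Ioi 0))
    (hbdd : BddAbove {x | r < g x}) :
    {x | r < g x} =ᵐ[volume] Ioo (-sSup {x | r < g x}) (sSup {x | r < g x}) := by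
  set S := {x | r < g x}
  set a := sSup S
  have habs : ∀ x, g |x| = g x := fun x => by
    rcases abs_choice x with h | h <;> simp only [h, heven]
  rw [eventuallyEq_set]
  filter_upwards [(toFinite {-a, 0, a}).countable.ae_notMem volume] with x hx
  simp only [mem_insert_iff, mem_singleton_iff, not_or] at hx
  obtain ⟨hxa, hx0, hxa'⟩ := hx
  have hx_abs : |x| ≠ a := fun h => by
    rcases abs_choice x with h' | h' <;> rw [h'] at h
    · exact hxa' h
    · exact hxa (by linarith)
  rw [mem_Ioo, ← abs_lt]
  constructor
  · intro hxS
    exact (le_csSup hbdd (show |x| ∈ S by simpa [S, habs] using hxS)).lt_of_ne hx_abs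
  · intro hlt
    rcases S.eq_empty_or_nonempty with hS | hS
    · simp [a, hS] at hlt
      exact absurd hlt (abs_nonneg x).not_gt
    obtain ⟨y, hyS, hxy⟩ := exists_lt_of_lt_csSup hS hlt
    have hx_pos : 0 < |x| := abs_pos.2 hx0
    show r < g x
    rw [← habs]
    exact hyS.trans_le (hanti hx_pos (hx_pos.trans hxy) hxy.le)

theorem abs_setIntegral_superlevel_min_le (hg : Integrable g) (heven : ∀ x, g (-x) = g x)
    (hanti : AntitoneOn g (Ioi 0)) {F : ℝ → ℝ} {abar ε : ℝ}
    (hF : ∀ a : ℝ, abar ≤ a → |∫ x in (-a)..a, F x| ≤ ε * a) (hr : 0 < r) :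
    |∫ x in {x | r < min (g abar) (g x)}, F x| ≤
      ε / 2 * volume.real {x | r < min (g abar) (g x)} := by
  rcases le_or_gt (g abar) r with hle | hlt
  · have hempty : {x | r < min (g abar) (g x)} = ∅ :=
      eq_empty_of_forall_notMem fun x hx => (hx.trans_le (min_le_left _ _)).not_ge hle
    rw [hempty, Measure.restrict_empty, integral_zero_measure, measureReal_empty]
    simp
  have hset : {x | r < min (g abar) (g x)} = {x | r < g x} := by ext; simp [hlt]
  have hbdd := bddAbove_superlevel_of_antitoneOn hg hanti hr
  set a := sSup {x | r < g x}
  have habar : abar ≤ a := le_csSup hbdd hlt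
  have hneg_abar : -abar ≤ a := le_csSup hbdd (show r < g (-abar) by rwa [heven])
  have hae := superlevel_ae_eq_Ioo_sSup heven hanti hbdd
  rw [hset, setIntegral_congr_set hae, measureReal_congr hae,
    Real.volume_real_Ioo_of_le (by linarith), ← integral_Ioc_eq_integral_Ioo,
    ← intervalIntegral.integral_of_le (by linarith)]
  calc |∫ x in (-a)..a, F x| ≤ ε * a := hF a habar
    _ = ε / 2 * (a - -a) := by ring

end SymmetricDecreasing

theorem slicing_estimate_general
    (g : ℝ → ℝ) (hgInt : Integrable g)
    (hgeven : ∀ x, g (-x) = g x)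
    (hgpos : ∀ x, 0 < g x)
    (hganti : StrictAntiOn g (Ioi 0))
    (hgnorm : ∫ x, g x ≤ 1)
    (abar : ℝ)
    (γ : ℝ → ℝ) (hγ : ∀ x, γ x = min (g abar) (g x))
    (F : ℝ → ℝ) (hFm : Measurable F) (C : ℝ) (hFb : ∀ x, |F x| ≤ C)
    (ε : ℝ) (hε : 0 ≤ ε)
    (hF : ∀ a : ℝ, abar ≤ a → |∫ x in (-a)..a, F x| ≤ ε * a) :
    |∫ x, F x * γ x| ≤ (ε / 2) * ∫ x, γ x ∧ (ε / 2) * ∫ x, γ x ≤ ε / 2 := by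
  obtain rfl : γ = fun x => min (g abar) (g x) := funext hγ
  have hγ0 : ∀ x, 0 ≤ min (g abar) (g x) := fun x => (lt_min (hgpos abar) (hgpos x)).le
  have hγ_le : ∀ x, min (g abar) (g x) ≤ g x := fun x => min_le_right _ _
  have hγ_int : Integrable fun x => min (g abar) (g x) :=
    hgInt.mono' (aemeasurable_const.min hgInt.aemeasurable).aestronglyMeasurable
      (ae_of_all _ fun x => by rw [Real.norm_of_nonneg (hγ0 x)]; exact hγ_le x)
  have hFγ_int : Integrable fun x => F x * min (g abar) (g x) :=
    hγ_int.bdd_mul hFm.aestronglyMeasurable (ae_of_all _ hFb)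
  refine ⟨abs_integral_mul_le_of_abs_setIntegral_superlevel_le hFm.aestronglyMeasurable hγ_int
    (ae_of_all _ hγ0) hFγ_int fun r hr =>
      abs_setIntegral_superlevel_min_le hgInt hgeven hganti.antitoneOn hF hr, ?_⟩
  exact mul_le_of_le_one_right (by positivity)
    ((integral_mono hγ_int hgInt hγ_le).trans hgnorm)

theorem slicing_estimate
    (g : ℝ → ℝ) (hgInt : Integrable g)
    (hgeven : ∀ x, g (-x) = g x)
    (hgpos : ∀ x, 0 < g x)
    (hganti : StrictAntiOn g (Ioi 0))
    (hgnorm : ∫ x, g x ≤ 1)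
    (abar : ℝ) (habar : 0 < abar)
    (γ : ℝ → ℝ) (hγ : ∀ x, γ x = min (g abar) (g x))
    (F : ℝ → ℝ) (hFm : Measurable F) (C : ℝ) (hFb : ∀ x, |F x| ≤ C)
    (ε : ℝ) (hε : 0 ≤ ε)
    (hF : ∀ a : ℝ, abar ≤ a → |∫ x in (-a)..a, F x| ≤ ε * a) :
    |∫ x, F x * γ x| ≤ (ε / 2) * ∫ x, γ x ∧ (ε / 2) * ∫ x, γ x ≤ ε / 2 :=
  slicing_estimate_general g hgInt hgeven hgpos hganti hgnorm abar γ hγ F hFm C hFb ε hε hF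
end
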